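/- Let p ≥ 3 be any prime. Then for all integers m ≥ 0, α ≥ 0 and n ≥ 0, the generalized overcubic partition function satisfies a̅_{8m+3}(8·p^{2α} n + p^{2α}) ≡ 2·t(n) (mod 16), where t(n) is the coefficient of q^n in Ramanujan's theta function ψ(q) = Σ_{ν≥0} q^{ν(ν+1)/2}; that is, t(n) = 1 if n is a triangular number and t(n) = 0 otherwise. -/

import Mathlib

/-- The infinite product `(q^h; q^h)_∞ = ∏_{k ≥ 0} (1 - q^{h(k+1)})` as a formal power
series over `R`.  Since the factor `1 - q^{h(k+1)}` only affects coefficients of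
degree `≥ k + 1`, the coefficient of `qⁿ` is that of the finite truncated product
over `k < n + 1`. -/
noncomputable def qPochInf (R : Type*) [CommRing R] (h : ℕ) : PowerSeries R :=
  PowerSeries.mk fun n =>
    PowerSeries.coeff (R := R) n
      (∏ k ∈ Finset.range (n + 1), (1 - PowerSeries.X ^ (h * (k + 1))))

/-- `abar` is the generalized overcubic partition family: for every `c ≥ 1`,
`∑_{n≥0} a̅_c(n) qⁿ = f₄^(c-1) / (f₁² f₂^(2c-3))`, stated multiplied out (both sides
multiplied by `f₁² f₂^(2c-3) · f₂³ = f₁² f₂^(2c) / f₂³`, i.e. as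
`(∑ a̅_c(n) qⁿ) · f₁² · f₂^(2c) = f₄^(c-1) · f₂³`) so as to avoid the negative
exponent `2c - 3 = -1` occurring when `c = 1`; this is equivalent since the `fₕ`
are units in the ring of formal power series. -/
def IsGenOvercubic (abar : ℕ → ℕ → ℕ) : Prop :=
  ∀ c : ℕ, 1 ≤ c →
    (PowerSeries.mk fun n => (abar c n : ℤ)) * qPochInf ℤ 1 ^ 2 * qPochInf ℤ 2 ^ (2 * c) =
      qPochInf ℤ 4 ^ (c - 1) * qPochInf ℤ 2 ^ 3

open scoped Classical

/-!
By Gauss's identity `φ(-q^h) = f_h² / f_{2h}` the generating function of `a̅_c` is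
`1 / (φ(-q) φ(-q²)^(c-1))`, and together with `φ(q) φ(-q) = φ(-q²)²` this gives
`(∑ a̅_c(N) q^N) · φ(-q²)^(c+1) = φ(q)`. Both theta identities come from the finite Jacobi triple
product `∏_{j<n} (1 - q^(h(2j+1)))² = ∑_{|k|≤n} (-1)^k q^(hk²) [2n, n+k]_{q^(2h)}`, compared with
the infinite products modulo `q^N` for `n ≥ 2N`.

For `c = 8m + 3` the exponent `c + 1` is a multiple of `4`, so `φ(-q²) = 1 + 2γ(q²)` gives
`φ(-q²)^(c+1) = 1 + 8G(q²)`. As the odd coefficients of `φ(q)` are even, the odd coefficients of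
`∑ a̅_c(N) q^N` agree modulo `16` with those of `φ(q)`: `a̅_c(N) ≡ 2·[N is a square]` for odd `N`.
Finally `p^(2α)(8n + 1)` is a square iff `8n + 1` is, i.e. iff `n` is triangular.
-/

open PowerSeries Finset

theorem SModEq.mul_right_cancel_of_isUnit {A : Type*} [CommRing A] {I : Ideal A} {a b u : A}
    (hu : IsUnit u) (h : a * u ≡ b * u [SMOD I]) : a ≡ b [SMOD I] := by
  obtain ⟨v, hv⟩ := hu.exists_right_inv
  simpa [mul_assoc, hv] using h.mul (SModEq.refl v)

namespace PowerSeries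

variable {R : Type*} [CommRing R]

theorem smodEq_X_pow_iff {N : ℕ} {f g : R⟦X⟧} :
    f ≡ g [SMOD Ideal.span {X ^ N}] ↔ ∀ i < N, coeff i f = coeff i g := by
  simp only [SModEq.sub_mem, Ideal.mem_span_singleton, X_pow_dvd_iff, map_sub, sub_eq_zero]

theorem X_pow_smodEq_zero {N e : ℕ} (h : N ≤ e) : (X : R⟦X⟧) ^ e ≡ 0 [SMOD Ideal.span {X ^ N}] :=
  SModEq.zero.mpr (Ideal.mem_span_singleton.mpr (pow_dvd_pow X h))

theorem eq_of_forall_smodEq {f g : R⟦X⟧} (h : ∀ N, f ≡ g [SMOD Ideal.span {X ^ N}]) : f = g :=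
  ext fun n => smodEq_X_pow_iff.mp (h (n + 1)) n n.lt_succ_self

theorem rescale_smodEq {N : ℕ} {f g : R⟦X⟧} (a : R) (h : f ≡ g [SMOD Ideal.span {X ^ N}]) :
    rescale a f ≡ rescale a g [SMOD Ideal.span {X ^ N}] :=
  smodEq_X_pow_iff.mpr fun i hi => by rw [coeff_rescale, coeff_rescale, smodEq_X_pow_iff.mp h i hi]

theorem smodEq_of_succ_smodEq {F : ℕ → R⟦X⟧}
    (hF : ∀ n, F (n + 1) ≡ F n [SMOD Ideal.span {X ^ (n + 1)}]) {N n : ℕ} (hn : N ≤ n) :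
    F n ≡ F N [SMOD Ideal.span {X ^ N}] := by
  induction n, hn using Nat.le_induction with
  | base => rfl
  | succ n hNn ih =>
    refine (SModEq.mono ?_ (hF n)).trans ih
    exact Ideal.span_singleton_le_span_singleton.mpr (pow_dvd_pow X (by omega))

theorem mk_coeff_succ_smodEq {F : ℕ → R⟦X⟧}
    (hF : ∀ n, F (n + 1) ≡ F n [SMOD Ideal.span {X ^ (n + 1)}]) {N n : ℕ} (hn : N ≤ n) :
    mk (fun i => coeff i (F (i + 1))) ≡ F n [SMOD Ideal.span {X ^ N}] := by
  refine smodEq_X_pow_iff.mpr fun i hi => ?_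
  rw [coeff_mk]
  exact smodEq_X_pow_iff.mp (smodEq_of_succ_smodEq hF (by omega : i + 1 ≤ n)).symm i
    i.lt_succ_self

variable (R)

noncomputable def qPoch (h M : ℕ) : R⟦X⟧ :=
  ∏ k ∈ range M, (1 - X ^ (h * (k + 1)))

noncomputable def qPochOdd (h M : ℕ) : R⟦X⟧ :=
  ∏ k ∈ range M, (1 - X ^ (h * (2 * k + 1)))

variable {R}

@[simp] theorem qPoch_zero (h : ℕ) : qPoch R h 0 = 1 := prod_range_zero _

theorem qPoch_succ (h M : ℕ) : qPoch R h (M + 1) = qPoch R h M * (1 - X ^ (h * (M + 1))) :=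
  prod_range_succ _ _

theorem qPochOdd_succ (h M : ℕ) :
    qPochOdd R h (M + 1) = qPochOdd R h M * (1 - X ^ (h * (2 * M + 1))) :=
  prod_range_succ _ _

theorem qPoch_two_mul (h n : ℕ) : qPoch R h (2 * n) = qPochOdd R h n * qPoch R (2 * h) n := by
  induction n with
  | zero => simp [qPoch, qPochOdd]
  | succ n ih =>
    rw [show 2 * (n + 1) = 2 * n + 1 + 1 by ring, qPoch_succ, qPoch_succ, ih, qPochOdd_succ,
      qPoch_succ, show h * (2 * n + 1 + 1) = 2 * h * (n + 1) by ring]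
    ring

theorem constantCoeff_qPoch {h : ℕ} (hh : 0 < h) (M : ℕ) : constantCoeff (qPoch R h M) = 1 := by
  simp [qPoch, map_prod, hh.ne']

theorem isUnit_qPoch {h : ℕ} (hh : 0 < h) (M : ℕ) : IsUnit (qPoch R h M) :=
  isUnit_iff_constantCoeff.mpr (by rw [constantCoeff_qPoch hh]; exact isUnit_one)

theorem qPoch_succ_smodEq {h : ℕ} (hh : 0 < h) (M : ℕ) :
    qPoch R h (M + 1) ≡ qPoch R h M [SMOD Ideal.span {X ^ (M + 1)}] := by
  rw [qPoch_succ]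
  simpa using (SModEq.refl (qPoch R h M)).mul
    ((SModEq.refl 1).sub (X_pow_smodEq_zero (Nat.le_mul_of_pos_left _ hh)))

theorem qPoch_smodEq {h : ℕ} (hh : 0 < h) {N M : ℕ} (hM : N ≤ M) :
    qPoch R h M ≡ qPoch R h N [SMOD Ideal.span {X ^ N}] :=
  smodEq_of_succ_smodEq (qPoch_succ_smodEq hh) hM

theorem qPochInf_smodEq {h : ℕ} (hh : 0 < h) {N M : ℕ} (hM : N ≤ M) :
    qPochInf R h ≡ qPoch R h M [SMOD Ideal.span {X ^ N}] :=
  mk_coeff_succ_smodEq (qPoch_succ_smodEq hh) hM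

theorem isUnit_qPochInf {h : ℕ} (hh : 0 < h) : IsUnit (qPochInf R h) := by
  refine isUnit_iff_constantCoeff.mpr ?_
  rw [← coeff_zero_eq_constantCoeff_apply,
    smodEq_X_pow_iff.mp (qPochInf_smodEq (M := 1) hh le_rfl) 0 one_pos,
    coeff_zero_eq_constantCoeff_apply, constantCoeff_qPoch hh]
  exact isUnit_one

theorem rescale_neg_one_X_pow_two_mul (e : ℕ) :
    rescale (-1 : R) (X ^ (2 * e)) = X ^ (2 * e) := by
  rw [map_pow, rescale_neg_one_X, pow_mul, pow_mul, neg_sq]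

theorem rescale_neg_one_qPoch_two_mul (h M : ℕ) :
    rescale (-1 : R) (qPoch R (2 * h) M) = qPoch R (2 * h) M := by
  simp only [qPoch, map_prod, map_sub, map_one, mul_assoc, rescale_neg_one_X_pow_two_mul]

theorem rescale_neg_one_qPochOdd_mul_qPochOdd (M : ℕ) :
    rescale (-1 : R) (qPochOdd R 1 M) * qPochOdd R 1 M = qPochOdd R 2 M := by
  simp only [qPochOdd, map_prod, ← prod_mul_distrib, map_sub, map_one, map_pow,
    rescale_neg_one_X, one_mul]
  refine prod_congr rfl fun k _ => ?_
  rw [Odd.neg_pow ⟨k, rfl⟩, pow_mul' X 2]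
  ring

variable (R)

/-- The Gaussian binomial coefficient `[n choose k]` in the base `q ^ h`. -/
noncomputable def qBinom (h : ℕ) : ℕ → ℕ → R⟦X⟧
  | 0, 0 => 1
  | 0, _ + 1 => 0
  | _ + 1, 0 => 1
  | n + 1, k + 1 => qBinom h n k + X ^ (h * (k + 1)) * qBinom h n (k + 1)

variable {R}

@[simp] theorem qBinom_zero_right (h n : ℕ) : qBinom R h n 0 = 1 := by cases n <;> rfl

theorem qBinom_succ_succ (h n k : ℕ) :
    qBinom R h (n + 1) (k + 1) = qBinom R h n k + X ^ (h * (k + 1)) * qBinom R h n (k + 1) :=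
  rfl

theorem qBinom_eq_zero_of_lt (h : ℕ) {n k : ℕ} (hnk : n < k) : qBinom R h n k = 0 := by
  induction n generalizing k with
  | zero => obtain ⟨k, rfl⟩ := Nat.exists_eq_add_one_of_ne_zero hnk.ne'; rfl
  | succ n ih =>
    obtain ⟨k, rfl⟩ := Nat.exists_eq_add_one_of_ne_zero (by omega : k ≠ 0)
    rw [qBinom_succ_succ, ih (by omega), ih (by omega), mul_zero, add_zero]

@[simp] theorem qBinom_self (h n : ℕ) : qBinom R h n n = 1 := by
  induction n with
  | zero => rfl
  | succ n ih =>
    rw [qBinom_succ_succ, ih, qBinom_eq_zero_of_lt h n.lt_succ_self, mul_zero, add_zero]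

theorem qBinom_one (h n : ℕ) : qBinom R h n 1 = ∑ i ∈ range n, (X : R⟦X⟧) ^ (h * i) := by
  induction n with
  | zero => exact qBinom_eq_zero_of_lt h one_pos
  | succ n ih =>
    rw [qBinom_succ_succ, qBinom_zero_right, ih, sum_range_succ', mul_sum, add_comm]
    simp only [← pow_add, mul_zero, pow_zero, ← mul_add, add_comm 1]

theorem qBinom_succ_succ' (h : ℕ) {n k : ℕ} (hk : k ≤ n) :
    qBinom R h (n + 1) (k + 1) = X ^ (h * (n - k)) * qBinom R h n k + qBinom R h n (k + 1) := by
  induction n generalizing k with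
  | zero =>
    obtain rfl : k = 0 := by omega
    simp [qBinom_eq_zero_of_lt h one_pos]
  | succ n ih =>
    rcases k with _ | k
    · rw [qBinom_zero_right, mul_one, Nat.sub_zero, qBinom_one, qBinom_one, sum_range_succ,
        add_comm]
    rcases Nat.lt_or_ge k n with hkn | hkn
    · rw [qBinom_succ_succ h n k, qBinom_succ_succ h n (k + 1),
        qBinom_succ_succ h (n + 1) (k + 1), ih (by omega), ih hkn,
        show n + 1 - (k + 1) = n - k by omega]
      have hX : (X : R⟦X⟧) ^ (h * (k + 1 + 1)) * X ^ (h * (n - (k + 1)))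
          = X ^ (h * (n - k)) * X ^ (h * (k + 1)) := by
        rw [← pow_add, ← pow_add, ← Nat.mul_add, ← Nat.mul_add]
        congr 2
        omega
      linear_combination qBinom R h n (k + 1) * hX
    · obtain rfl : k = n := by omega
      simp [qBinom_eq_zero_of_lt h (Nat.lt_succ_self (k + 1))]

theorem qBinom_mul_qPoch_mul_qPoch (h : ℕ) {n k : ℕ} (hk : k ≤ n) :
    qBinom R h n k * qPoch R h k * qPoch R h (n - k) = qPoch R h n := by
  induction n generalizing k with
  | zero =>
    obtain rfl : k = 0 := by omega
    simp
  | succ n ih =>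
    rcases k with _ | k
    · simp
    rcases Nat.lt_or_ge k n with hkn | hkn
    · have ih1 := ih (k := k) (by omega)
      have ih2 := ih (k := k + 1) hkn
      rw [show n - k = n - (k + 1) + 1 by omega, qPoch_succ] at ih1
      rw [qPoch_succ] at ih2
      rw [qBinom_succ_succ, show n + 1 - (k + 1) = n - (k + 1) + 1 by omega, qPoch_succ,
        qPoch_succ, qPoch_succ]
      have e : h * (k + 1) + h * (n - (k + 1) + 1) = h * (n + 1) := by
        rw [← Nat.mul_add]; congr 1; omega
      rw [← e, pow_add]
      linear_combination (1 - X ^ (h * (k + 1))) * ih1 +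
        X ^ (h * (k + 1)) * (1 - X ^ (h * (n - (k + 1) + 1))) * ih2
    · obtain rfl : k = n := by omega
      simp [qPoch_succ]

theorem sum_mul_qBinom_succ (h L : ℕ) (f : ℕ → R⟦X⟧) :
    ∑ j ∈ range (L + 2), f j * qBinom R h (L + 1) j =
      ∑ j ∈ range (L + 1), (f (j + 1) + X ^ (h * j) * f j) * qBinom R h L j := by
  have hshift : ∑ j ∈ range (L + 1), X ^ (h * j) * f j * qBinom R h L j =
      ∑ j ∈ range (L + 1), f (j + 1) * (X ^ (h * (j + 1)) * qBinom R h L (j + 1)) + f 0 := by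
    rw [sum_range_succ', sum_range_succ (fun j => f (j + 1) * _),
      qBinom_eq_zero_of_lt h L.lt_succ_self]
    simp only [mul_zero, add_zero, pow_zero, one_mul, qBinom_zero_right, mul_one]
    congr 1
    exact sum_congr rfl fun j _ => by ring
  rw [sum_range_succ']
  simp only [qBinom_succ_succ, qBinom_zero_right, add_mul, mul_add, sum_add_distrib, hshift,
    mul_one, add_assoc]

theorem sum_mul_qBinom_succ' (h L : ℕ) (f : ℕ → R⟦X⟧) :
    ∑ j ∈ range (L + 2), f j * qBinom R h (L + 1) j =
      ∑ j ∈ range (L + 1), (f j + X ^ (h * (L - j)) * f (j + 1)) * qBinom R h L j := by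
  have hshift : ∑ j ∈ range (L + 1), f j * qBinom R h L j =
      ∑ j ∈ range (L + 1), f (j + 1) * qBinom R h L (j + 1) + f 0 := by
    rw [sum_range_succ', sum_range_succ (fun j => f (j + 1) * _),
      qBinom_eq_zero_of_lt h L.lt_succ_self, mul_zero, add_zero, qBinom_zero_right, mul_one]
  rw [sum_range_succ', sum_congr rfl fun j hj => by
    rw [qBinom_succ_succ' h (Nat.lt_succ_iff.mp (mem_range.mp hj))]]
  simp only [add_mul, mul_add, sum_add_distrib, hshift, qBinom_zero_right, mul_one]
  rw [sum_congr rfl fun j _ => mul_left_comm (f (j + 1)) (X ^ (h * (L - j))) _]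
  simp only [mul_assoc]
  ring

variable (R)

/-- `(-1) ^ (j - n) q ^ (h (j - n)²)`, the `(j - n)`-th term of `φ(-q^h)`. -/
noncomputable def thetaTerm (h n j : ℕ) : R⟦X⟧ :=
  (-1) ^ (j + n) * X ^ (h * ((j : ℤ) - n).natAbs ^ 2)

noncomputable def jacobiSum (h n : ℕ) : R⟦X⟧ :=
  ∑ j ∈ range (2 * n + 1), thetaTerm R h n j * qBinom R (2 * h) (2 * n) j

noncomputable def jacobiSumOdd (h n : ℕ) : R⟦X⟧ :=
  ∑ j ∈ range (2 * n + 2), thetaTerm R h n j * qBinom R (2 * h) (2 * n + 1) j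

variable {R}

theorem thetaTerm_succ_succ (h n j : ℕ) : thetaTerm R h (n + 1) (j + 1) = thetaTerm R h n j := by
  rw [thetaTerm, thetaTerm, show j + 1 + (n + 1) = j + n + 2 by ring, pow_add, neg_one_sq,
    mul_one]
  push_cast
  ring_nf

theorem X_pow_mul_thetaTerm_succ (h n j : ℕ) :
    X ^ (2 * h * j) * thetaTerm R h (n + 1) j = -(X ^ (h * (2 * n + 1)) * thetaTerm R h n j) := by
  have e : 2 * h * j + h * ((j : ℤ) - ↑(n + 1)).natAbs ^ 2 =
      h * (2 * n + 1) + h * ((j : ℤ) - n).natAbs ^ 2 := by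
    zify
    simp only [sq_abs]
    ring
  rw [thetaTerm, thetaTerm, mul_left_comm, ← pow_add, e, pow_add]
  ring

theorem X_pow_mul_thetaTerm_succ_right (h : ℕ) {n j : ℕ} (hj : j ≤ 2 * n) :
    X ^ (2 * h * (2 * n - j)) * thetaTerm R h n (j + 1) =
      -(X ^ (h * (2 * n + 1)) * thetaTerm R h n j) := by
  have e : 2 * h * (2 * n - j) + h * ((↑(j + 1) : ℤ) - n).natAbs ^ 2 =
      h * (2 * n + 1) + h * ((j : ℤ) - n).natAbs ^ 2 := by
    zify [hj]
    simp only [sq_abs]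
    ring
  rw [thetaTerm, thetaTerm, mul_left_comm, ← pow_add, e, pow_add]
  ring

theorem jacobiSumOdd_eq (h n : ℕ) :
    jacobiSumOdd R h n = (1 - X ^ (h * (2 * n + 1))) * jacobiSum R h n := by
  rw [jacobiSumOdd, sum_mul_qBinom_succ', jacobiSum, mul_sum]
  refine sum_congr rfl fun j hj => ?_
  rw [X_pow_mul_thetaTerm_succ_right h (by simp at hj; omega)]
  ring

theorem jacobiSum_succ (h n : ℕ) :
    jacobiSum R h (n + 1) = (1 - X ^ (h * (2 * n + 1))) * jacobiSumOdd R h n := by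
  rw [jacobiSum, show 2 * (n + 1) + 1 = 2 * n + 1 + 2 by ring, show 2 * (n + 1) = 2 * n + 1 + 1
    by ring, sum_mul_qBinom_succ, jacobiSumOdd, mul_sum]
  refine sum_congr rfl fun j _ => ?_
  rw [thetaTerm_succ_succ, X_pow_mul_thetaTerm_succ]
  ring

/-- The finite form of the Jacobi triple product at `z = 1`. -/
theorem jacobiSum_eq (h n : ℕ) : jacobiSum R h n = qPochOdd R h n ^ 2 := by
  induction n with
  | zero => simp [jacobiSum, qPochOdd, thetaTerm]
  | succ n ih =>
    rw [jacobiSum_succ, jacobiSumOdd_eq, ih, qPochOdd_succ]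
    ring

variable (R)

noncomputable def phiNegPartial (h n : ℕ) : R⟦X⟧ :=
  ∑ k ∈ range n, (-1) ^ (k + 1) * X ^ (h * (k + 1) ^ 2)

noncomputable def phiNegTail (h : ℕ) : R⟦X⟧ :=
  mk fun i => coeff i (phiNegPartial R h (i + 1))

/-- Ramanujan's `φ(-q^h) = ∑_{k ∈ ℤ} (-1)^k q^(h k²)`. -/
noncomputable def phiNeg (h : ℕ) : R⟦X⟧ :=
  1 + 2 * phiNegTail R h

variable {R}

theorem phiNegPartial_succ (h n : ℕ) :
    phiNegPartial R h (n + 1) = phiNegPartial R h n + (-1) ^ (n + 1) * X ^ (h * (n + 1) ^ 2) :=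
  sum_range_succ _ _

theorem phiNegPartial_succ_smodEq {h : ℕ} (hh : 0 < h) (n : ℕ) :
    phiNegPartial R h (n + 1) ≡ phiNegPartial R h n [SMOD Ideal.span {X ^ (n + 1)}] := by
  have hX := X_pow_smodEq_zero (R := R) (N := n + 1) (e := h * (n + 1) ^ 2)
    ((Nat.le_self_pow two_ne_zero _).trans (Nat.le_mul_of_pos_left _ hh))
  rw [phiNegPartial_succ]
  simpa using (SModEq.refl (phiNegPartial R h n)).add ((SModEq.refl _).mul hX)

theorem phiNeg_smodEq_phiNegPartial {h : ℕ} (hh : 0 < h) {N n : ℕ} (hn : N ≤ n) :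
    phiNeg R h ≡ 1 + 2 * phiNegPartial R h n [SMOD Ideal.span {X ^ N}] :=
  SModEq.rfl.add (SModEq.rfl.mul (mk_coeff_succ_smodEq (phiNegPartial_succ_smodEq hh) hn))

theorem sum_thetaTerm (h n : ℕ) :
    ∑ j ∈ range (2 * n + 1), thetaTerm R h n j = 1 + 2 * phiNegPartial R h n := by
  induction n with
  | zero => simp [thetaTerm, phiNegPartial]
  | succ n ih =>
    have hends : thetaTerm R h (n + 1) 0 = (-1) ^ (n + 1) * X ^ (h * (n + 1) ^ 2) ∧
        thetaTerm R h n (2 * n + 1) = (-1) ^ (n + 1) * X ^ (h * (n + 1) ^ 2) := by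
      rw [thetaTerm, thetaTerm, show ((↑(0 : ℕ) : ℤ) - ↑(n + 1)).natAbs = n + 1 by omega,
        show ((↑(2 * n + 1) : ℤ) - n).natAbs = n + 1 by omega,
        show 2 * n + 1 + n = (n + 1) + 2 * n by ring, pow_add _ (n + 1),
        (even_two_mul n).neg_one_pow, mul_one, zero_add]
      exact ⟨rfl, rfl⟩
    rw [show 2 * (n + 1) + 1 = 2 * n + 1 + 1 + 1 by ring, sum_range_succ',
      sum_congr rfl fun j _ => thetaTerm_succ_succ h n j, sum_range_succ, ih, hends.1, hends.2,
      phiNegPartial_succ]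
    ring

theorem qBinom_mul_qPoch_smodEq_one {h : ℕ} (hh : 0 < h) {N n k M : ℕ} (hk : k ≤ n)
    (hNk : N ≤ k) (hNnk : N ≤ n - k) (hNM : N ≤ M) :
    qBinom R h n k * qPoch R h M ≡ 1 [SMOD Ideal.span {X ^ N}] := by
  have hcube : qBinom R h n k * qPoch R h N * qPoch R h N ≡ 1 * qPoch R h N
      [SMOD Ideal.span {X ^ N}] := by
    have hNk := (qPoch_smodEq (R := R) hh hNk).symm
    have hNnk := (qPoch_smodEq (R := R) hh hNnk).symm
    refine (((SModEq.refl (qBinom R h n k)).mul hNk).mul hNnk).trans ?_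
    rw [qBinom_mul_qPoch_mul_qPoch h hk, one_mul]
    exact qPoch_smodEq hh (by omega)
  exact ((SModEq.refl (qBinom R h n k)).mul (qPoch_smodEq hh hNM)).trans
    (SModEq.mul_right_cancel_of_isUnit (isUnit_qPoch hh N) hcube)

theorem thetaTerm_mul_qBinom_mul_qPoch_smodEq {h : ℕ} (hh : 0 < h) {N n j : ℕ}
    (hn : 2 * N ≤ n) (hj : j ≤ 2 * n) :
    thetaTerm R h n j * qBinom R (2 * h) (2 * n) j * qPoch R (2 * h) n ≡ thetaTerm R h n j
      [SMOD Ideal.span {X ^ N}] := by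
  by_cases hd : N ≤ h * ((j : ℤ) - n).natAbs ^ 2
  · have h0 : thetaTerm R h n j ≡ 0 [SMOD Ideal.span {X ^ N}] := by
      have := (SModEq.refl ((-1 : R⟦X⟧) ^ (j + n))).mul (X_pow_smodEq_zero (R := R) hd)
      rwa [mul_zero] at this
    have h0' := (h0.mul (SModEq.refl (qBinom R (2 * h) (2 * n) j))).mul
      (SModEq.refl (qPoch R (2 * h) n))
    rw [zero_mul, zero_mul] at h0'
    exact h0'.trans h0.symm
  · -- a term of low degree has `|j - n| < N`, so both `j` and `2n - j` are at least `N`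
    have hd' : ((j : ℤ) - n).natAbs < N :=
      ((Nat.le_self_pow two_ne_zero _).trans (Nat.le_mul_of_pos_left _ hh)).trans_lt
        (not_le.mp hd)
    have h1 := (SModEq.refl (thetaTerm R h n j)).mul
      (qBinom_mul_qPoch_smodEq_one (R := R) (h := 2 * h) (N := N) (M := n) (by omega) hj
        (by omega) (by omega) (by omega))
    rwa [mul_one, ← mul_assoc] at h1

theorem phiNeg_smodEq {h : ℕ} (hh : 0 < h) {N n : ℕ} (hn : 2 * N ≤ n) :
    phiNeg R h ≡ qPochOdd R h n ^ 2 * qPoch R (2 * h) n [SMOD Ideal.span {X ^ N}] := by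
  refine (phiNeg_smodEq_phiNegPartial hh (by omega : N ≤ n)).trans ?_
  rw [← jacobiSum_eq, jacobiSum, sum_mul, ← sum_thetaTerm]
  exact SModEq.sum fun j hj =>
    (thetaTerm_mul_qBinom_mul_qPoch_smodEq hh hn (by simp at hj; omega)).symm

/-- Gauss's identity `φ(-q^h) = f_h² / f_{2h}`. -/
theorem phiNeg_mul_qPochInf {h : ℕ} (hh : 0 < h) :
    phiNeg R h * qPochInf R (2 * h) = qPochInf R h ^ 2 := by
  refine eq_of_forall_smodEq fun N => ?_
  have h1 := phiNeg_smodEq (R := R) hh (le_refl (2 * N))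
  have h2 := qPochInf_smodEq (R := R) (h := 2 * h) (N := N) (by omega) (by omega : N ≤ 2 * N)
  have h3 := qPochInf_smodEq (R := R) hh (by omega : N ≤ 2 * (2 * N))
  refine (h1.mul h2).trans ?_
  rw [mul_assoc, ← sq, ← mul_pow, ← qPoch_two_mul]
  exact (h3.pow 2).symm

/-- `φ(q) φ(-q) = φ(-q²)²`. -/
theorem rescale_phiNeg_mul_phiNeg :
    rescale (-1 : R) (phiNeg R 1) * phiNeg R 1 = phiNeg R 2 ^ 2 := by
  refine eq_of_forall_smodEq fun N => ?_
  have h1 := phiNeg_smodEq (R := R) one_pos (le_refl (2 * N))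
  have h2 := phiNeg_smodEq (R := R) two_pos (le_refl (2 * N))
  have hO := rescale_neg_one_qPochOdd_mul_qPochOdd (R := R) (2 * N)
  have hP : qPoch R 2 (2 * N) ≡ qPoch R 2 (2 * (2 * N)) [SMOD Ideal.span {X ^ N}] :=
    (qPoch_smodEq two_pos (by omega : N ≤ 2 * N)).trans
      (qPoch_smodEq two_pos (by omega : N ≤ 2 * (2 * N))).symm
  refine ((rescale_smodEq (-1) h1).mul h1).trans (SModEq.trans ?_ (h2.pow 2).symm)
  rw [map_mul, map_pow, rescale_neg_one_qPoch_two_mul, Nat.mul_one,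
    show (rescale (-1 : R) (qPochOdd R 1 (2 * N))) ^ 2 * qPoch R 2 (2 * N) *
      (qPochOdd R 1 (2 * N) ^ 2 * qPoch R 2 (2 * N)) =
        qPochOdd R 2 (2 * N) ^ 2 * qPoch R 2 (2 * N) ^ 2 by rw [← hO]; ring,
    show (qPochOdd R 2 (2 * N) ^ 2 * qPoch R (2 * 2) (2 * N)) ^ 2 =
        qPochOdd R 2 (2 * N) ^ 2 * qPoch R 2 (2 * (2 * N)) ^ 2 by
      rw [qPoch_two_mul (R := R) 2 (2 * N)]; ring]
  exact (SModEq.refl _).mul (hP.pow 2)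

variable (R)

/-- The power series in `q²`. -/
def evenSubring : Subring R⟦X⟧ where
  carrier := {f | ∀ j, Odd j → coeff j f = 0}
  mul_mem' {f g} hf hg j hj := by
    rw [coeff_mul]
    refine sum_eq_zero fun ab hab => ?_
    rw [HasAntidiagonal.mem_antidiagonal] at hab
    subst hab
    rcases Nat.even_or_odd ab.1 with ha | ha
    · rw [hg ab.2 ((Nat.odd_add'.mp hj).mpr ha), mul_zero]
    · rw [hf ab.1 ha, zero_mul]
  one_mem' j hj := by simp [coeff_one, hj.pos.ne']
  add_mem' hf hg j hj := by simp [hf j hj, hg j hj]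
  zero_mem' j _ := map_zero _
  neg_mem' hf j hj := by simp [hf j hj]

variable {R}

theorem exists_mem_one_add_two_mul_pow_four_mul {A : Type*} [CommRing A] {S : Subring A} {γ : A}
    (hγ : γ ∈ S) (k : ℕ) : ∃ G ∈ S, (1 + 2 * γ) ^ (4 * k) = 1 + 8 * G := by
  induction k with
  | zero => exact ⟨0, S.zero_mem, by simp⟩
  | succ k ih =>
    obtain ⟨G, hG, hpow⟩ := ih
    set H := γ + 3 * γ ^ 2 + 4 * γ ^ 3 + 2 * γ ^ 4
    have hH : H ∈ S := by aesop
    refine ⟨G + H + 8 * G * H, by aesop, ?_⟩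
    rw [mul_add, mul_one, pow_add, hpow]
    ring

theorem two_dvd_coeff_mul {Φ G : ℤ⟦X⟧} (hΦ : ∀ j, Odd j → 2 ∣ coeff j Φ)
    (hG : G ∈ evenSubring ℤ) {N : ℕ} (hN : Odd N) : 2 ∣ coeff N (Φ * G) := by
  rw [coeff_mul]
  refine dvd_sum fun ab hab => ?_
  rw [HasAntidiagonal.mem_antidiagonal] at hab
  subst hab
  rcases Nat.even_or_odd ab.2 with hb | hb
  · exact (hΦ ab.1 ((Nat.odd_add.mp hN).mpr hb)).mul_right _
  · rw [hG ab.2 hb, mul_zero]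
    exact dvd_zero 2

theorem coeff_modEq_sixteen_of_mul_eq {A Φ G : ℤ⟦X⟧} (h : A * (1 + 8 * G) = Φ)
    (hG : G ∈ evenSubring ℤ) (hΦ : ∀ j, Odd j → 2 ∣ coeff j Φ) {N : ℕ} (hN : Odd N) :
    coeff N A ≡ coeff N Φ [ZMOD 16] := by
  have hA : A = Φ - C 8 * (Φ * G) + C 64 * (A * G ^ 2) := by
    simp only [map_ofNat]
    linear_combination (1 - 8 * G) * h
  obtain ⟨c, hc⟩ := two_dvd_coeff_mul hΦ hG hN
  have hcoeff := congrArg (coeff N) hA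
  rw [map_add, map_sub, coeff_C_mul, coeff_C_mul, hc] at hcoeff
  exact Int.modEq_iff_dvd.mpr ⟨c - 4 * coeff N (A * G ^ 2), by rw [hcoeff]; ring⟩

theorem coeff_phiNegTail (h i : ℕ) :
    coeff i (phiNegTail R h) =
      ∑ k ∈ range (i + 1), if i = h * (k + 1) ^ 2 then (-1) ^ (k + 1) else 0 := by
  rw [phiNegTail, coeff_mk, phiNegPartial, map_sum]
  refine sum_congr rfl fun k _ => ?_
  rw [show ((-1 : R⟦X⟧)) ^ (k + 1) = C ((-1) ^ (k + 1)) by simp, coeff_C_mul, coeff_X_pow]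
  split_ifs <;> simp

theorem phiNegTail_two_mem_evenSubring : phiNegTail R 2 ∈ evenSubring R := fun j hj => by
  rw [coeff_phiNegTail]
  refine sum_eq_zero fun k _ => if_neg ?_
  rintro rfl
  exact Nat.not_odd_iff_even.mpr (even_two_mul _) hj

theorem coeff_phiNegTail_one_of_odd {N : ℕ} (hN : Odd N) :
    coeff N (phiNegTail ℤ 1) = -if IsSquare N then 1 else 0 := by
  rw [coeff_phiNegTail]
  split_ifs with hsq
  · obtain ⟨r, rfl⟩ := hsq
    have hr : Odd r := (Nat.odd_mul.mp hN).1
    have hr0 : r ≠ 0 := by rintro rfl; simp at hN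
    rw [sum_eq_single (r - 1)]
    · rw [Nat.sub_add_cancel (Nat.one_le_iff_ne_zero.mpr hr0), if_pos (by ring), hr.neg_one_pow]
    · intro k _ hk
      refine if_neg fun hkr => hk ?_
      rw [one_mul, ← sq] at hkr
      have := Nat.pow_left_injective two_ne_zero hkr
      omega
    · intro hr'
      exact absurd (mem_range.mpr (((Nat.sub_le r 1).trans (Nat.le_mul_self r)).trans_lt
        (Nat.lt_succ_self _))) hr'
  · refine (sum_eq_zero fun k _ => if_neg fun hk => hsq ⟨k + 1, by rw [hk]; ring⟩).trans ?_
    simp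

theorem coeff_rescale_phiNeg_one_of_odd {N : ℕ} (hN : Odd N) :
    coeff N (rescale (-1 : ℤ) (phiNeg ℤ 1)) = 2 * if IsSquare N then 1 else 0 := by
  rw [coeff_rescale, hN.neg_one_pow, phiNeg, map_add, coeff_one, if_neg hN.pos.ne',
    ← map_ofNat C 2, coeff_C_mul, coeff_phiNegTail_one_of_odd hN]
  ring

end PowerSeries

theorem Nat.isSquare_sq_mul_iff {d : ℕ} (hd : d ≠ 0) {b : ℕ} :
    IsSquare (d ^ 2 * b) ↔ IsSquare b := by
  refine ⟨fun ⟨s, hs⟩ => ?_, fun ⟨t, ht⟩ => ⟨d * t, by rw [ht]; ring⟩⟩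
  obtain ⟨t, rfl⟩ : d ∣ s := (Nat.pow_dvd_pow_iff two_ne_zero).mp ⟨b, by rw [sq s, hs]⟩
  exact ⟨t, Nat.eq_of_mul_eq_mul_left (pow_pos (Nat.pos_of_ne_zero hd) 2) (by rw [hs]; ring)⟩

theorem Nat.isSquare_eight_mul_add_one_iff (n : ℕ) :
    IsSquare (8 * n + 1) ↔ ∃ k, k * (k + 1) = 2 * n := by
  refine ⟨fun ⟨r, hr⟩ => ?_, fun ⟨k, hk⟩ => ⟨2 * k + 1, by ring_nf at hk ⊢; omega⟩⟩
  have hodd : Odd (r * r) := hr ▸ ⟨4 * n, by ring⟩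
  obtain ⟨k, rfl⟩ := (Nat.odd_mul.mp hodd).1
  exact ⟨k, by ring_nf at hr ⊢; omega⟩

namespace IsGenOvercubic

variable {abar : ℕ → ℕ → ℕ}

theorem mul_phiNeg (habar : IsGenOvercubic abar) {c : ℕ} (hc : 1 ≤ c) :
    mk (fun n => (abar c n : ℤ)) * phiNeg ℤ 1 * phiNeg ℤ 2 ^ (c - 1) = 1 := by
  obtain ⟨c, rfl⟩ := Nat.exists_eq_add_of_le' hc
  have hgen := habar (c + 1) hc
  have hφ1 := phiNeg_mul_qPochInf (R := ℤ) (h := 1) one_pos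
  have hφ2 := phiNeg_mul_qPochInf (R := ℤ) (h := 2) two_pos
  set f2 := qPochInf ℤ 2
  set f4 := qPochInf ℤ 4
  have hunit : IsUnit (f2 ^ 3 * f4 ^ c) :=
    ((isUnit_qPochInf two_pos).pow 3).mul ((isUnit_qPochInf (by norm_num)).pow c)
  rw [Nat.add_sub_cancel, ← hunit.mul_left_inj, one_mul]
  rw [Nat.add_sub_cancel] at hgen
  calc _ = mk (fun n => (abar (c + 1) n : ℤ)) * (phiNeg ℤ 1 * f2) * (phiNeg ℤ 2 * f4) ^ c *
        f2 ^ 2 := by ring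
    _ = f2 ^ 3 * f4 ^ c := by rw [hφ1, hφ2, ← pow_mul]; linear_combination hgen

theorem mul_phiNeg_two_pow (habar : IsGenOvercubic abar) {c : ℕ} (hc : 1 ≤ c) :
    mk (fun n => (abar c n : ℤ)) * phiNeg ℤ 2 ^ (c + 1) = rescale (-1) (phiNeg ℤ 1) := by
  obtain ⟨c, rfl⟩ := Nat.exists_eq_add_of_le' hc
  have h := habar.mul_phiNeg hc
  rw [Nat.add_sub_cancel] at h
  linear_combination rescale (-1) (phiNeg ℤ 1) * h - mk (fun n => (abar (c + 1) n : ℤ)) *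
    phiNeg ℤ 2 ^ c * rescale_phiNeg_mul_phiNeg (R := ℤ)

end IsGenOvercubic

/-- Let `p ≥ 3` be a prime.  Then for all `m, α, n ≥ 0`,
`a̅_{8m+3}(8 p^(2α) n + p^(2α)) ≡ 2 t(n) (mod 16)`, where `t(n)` is the coefficient
of `qⁿ` in Ramanujan's theta function `ψ(q) = ∑_{ν≥0} q^{ν(ν+1)/2}`, i.e. `t(n) = 1`
if `n` is a triangular number (`∃ k, k(k+1)/2 = n`, equivalently `k(k+1) = 2n`) and
`t(n) = 0` otherwise. -/
theorem overcubic_eight_congr_psi (abar : ℕ → ℕ → ℕ) (habar : IsGenOvercubic abar)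
    (p : ℕ) (hp : p.Prime) (hp3 : 3 ≤ p) (m α n : ℕ) :
    (abar (8 * m + 3) (8 * p ^ (2 * α) * n + p ^ (2 * α)) : ℤ) ≡
      2 * (if ∃ k : ℕ, k * (k + 1) = 2 * n then 1 else 0) [ZMOD 16] := by
  obtain ⟨G, hG, hpow⟩ :=
    exists_mem_one_add_two_mul_pow_four_mul (phiNegTail_two_mem_evenSubring (R := ℤ)) (2 * m + 1)
  have hA : mk (fun j => (abar (8 * m + 3) j : ℤ)) * (1 + 8 * G) = rescale (-1) (phiNeg ℤ 1) := by
    rw [← hpow, ← phiNeg, show 4 * (2 * m + 1) = 8 * m + 3 + 1 by ring]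
    exact habar.mul_phiNeg_two_pow (by omega)
  have hN : 8 * p ^ (2 * α) * n + p ^ (2 * α) = (p ^ α) ^ 2 * (8 * n + 1) := by ring
  have hodd : Odd ((p ^ α) ^ 2 * (8 * n + 1)) :=
    (hp.odd_of_ne_two (by omega)).pow.pow.mul ⟨4 * n, by ring⟩
  have key := coeff_modEq_sixteen_of_mul_eq hA hG
    (fun j hj => coeff_rescale_phiNeg_one_of_odd hj ▸ dvd_mul_right 2 _) hodd
  rw [coeff_mk, coeff_rescale_phiNeg_one_of_odd hodd, ← hN] at key
  simpa only [Nat.isSquare_sq_mul_iff (pow_ne_zero α hp.ne_zero),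
    Nat.isSquare_eight_mul_add_one_iff, hN] using key
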